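/- arXiv:2307.03964 — 4 statements merged into one kernel-verified Lean document; each statement's English description precedes it below -/
import Mathlib

section
/- For every cycle C_n of order n ≥ 3, rvd(C_n) = 2. -/
open SimpleGraph

variable {V : Type*}

/-- `c` is a rainbow vertex-disconnection coloring of `G`: for any two distinct vertices
`x, y` there is a set `S` avoiding `x` and `y` that meets every `x`-`y` walk of `G - xy`
(i.e. `x` and `y` lie in different components of `(G - xy) - S`), and which is rainbow
(when `x, y` nonadjacent), resp. such that `S + x` or `S + y` is rainbow (when adjacent). -/
def IsRVDColoring {α : Type*} (G : SimpleGraph V) (c : V → α) : Prop :=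
  ∀ x y : V, x ≠ y → ∃ S : Set V,
    x ∉ S ∧ y ∉ S ∧
    (∀ p : (G.deleteEdges {s(x, y)}).Walk x y, ∃ v ∈ p.support, v ∈ S) ∧
    (G.Adj x y → Set.InjOn c (insert x S) ∨ Set.InjOn c (insert y S)) ∧
    (¬ G.Adj x y → Set.InjOn c S)

/-- The rainbow vertex-disconnection number: the minimum number of colors of a
rainbow vertex-disconnection coloring. -/
noncomputable def rvd (G : SimpleGraph V) : ℕ :=
  sInf {n | ∃ c : V → Fin n, IsRVDColoring G c}

/-- `G` contains `K₄` as a minor (via a minor model with four branch sets). -/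
def HasK4Minor (G : SimpleGraph V) : Prop :=
  ∃ B : Fin 4 → Set V,
    (∀ i, (B i).Nonempty) ∧
    (∀ i, (G.induce (B i)).Connected) ∧
    (∀ i j, i ≠ j → Disjoint (B i) (B j)) ∧
    (∀ i j, i ≠ j → ∃ a ∈ B i, ∃ b ∈ B j, G.Adj a b)

/-- A finite graph is 2-connected if it has at least 3 vertices and deleting any
single vertex leaves a connected graph. -/
def TwoConnected [Fintype V] (G : SimpleGraph V) : Prop :=
  3 ≤ Fintype.card V ∧ ∀ w : V, (G.induce ({w}ᶜ : Set V)).Connected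

/-- Contraction of the edge `uv`: delete `v` and join `u` to the former neighbors of `v`. -/
def contractEdge (G : SimpleGraph V) (u v : V) : SimpleGraph {x : V // x ≠ v} where
  Adj a b := a ≠ b ∧ (G.Adj a b ∨ ((a : V) = u ∧ G.Adj v b) ∨ ((b : V) = u ∧ G.Adj v a))
  symm := by
    constructor
    rintro a b ⟨h1, h2⟩
    refine ⟨h1.symm, ?_⟩
    rcases h2 with h | h | h
    · exact Or.inl h.symm
    · exact Or.inr (Or.inr h)
    · exact Or.inr (Or.inl h)
  loopless := by constructor; rintro a ⟨h, _⟩; exact h rfl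

/-- `T_G(u)`: vertices `x` of degree at least 3 that are adjacent to `u` or joined
to `u` through a `2`-vertex. -/
def Tset [Fintype V] (G : SimpleGraph V) [DecidableRel G.Adj] (u : V) : Set V :=
  {x | 3 ≤ G.degree x ∧ (G.Adj u x ∨ ∃ z : V, G.degree z = 2 ∧ G.Adj u z ∧ G.Adj z x)}

/-- `t_G(u) = |T_G(u)|`. -/
noncomputable def tnum [Fintype V] (G : SimpleGraph V) [DecidableRel G.Adj] (u : V) : ℕ :=
  (Tset G u).ncard

/-- An injective coloring: vertices with a common neighbor get distinct colors. -/
def IsInjectiveColoring {α : Type*} (G : SimpleGraph V) (c : V → α) : Prop :=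
  ∀ u v w : V, G.Adj u w → G.Adj v w → u ≠ v → c u ≠ c v

/-- The injective chromatic number. -/
noncomputable def injChromaticNumber (G : SimpleGraph V) : ℕ :=
  sInf {n | ∃ c : V → Fin n, IsInjectiveColoring G c}

/-- A graph has no cut vertex if deleting any vertex leaves a preconnected graph. -/
def HasNoCutVertex {W : Type*} (H : SimpleGraph W) : Prop :=
  ∀ w : W, (H.induce ({w}ᶜ : Set W)).Preconnected

/-- A block of `G`: a maximal connected subgraph of `G` without a cut vertex. -/
def IsBlock (G : SimpleGraph V) (H : G.Subgraph) : Prop :=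
  H.coe.Connected ∧ HasNoCutVertex H.coe ∧
    ∀ H' : G.Subgraph, H ≤ H' → H'.coe.Connected → HasNoCutVertex H'.coe → H' = H

/-- `c` is a `k`-fold coloring: each vertex receives `k` colors, adjacent vertices get
disjoint color sets. -/
def IsKFoldColoring {n : ℕ} (G : SimpleGraph V) (k : ℕ) (c : V → Finset (Fin n)) : Prop :=
  (∀ v, (c v).card = k) ∧ ∀ u v, G.Adj u v → Disjoint (c u) (c v)

/-- The `k`-fold chromatic number `χ_k(G)`. -/
noncomputable def kfoldChromaticNumber (G : SimpleGraph V) (k : ℕ) : ℕ :=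
  sInf {n | ∃ c : V → Finset (Fin n), IsKFoldColoring G k c}

/-- The fractional chromatic number `χ_f(G) = inf_k χ_k(G)/k`. -/
noncomputable def fracChromaticNumber (G : SimpleGraph V) : ℝ :=
  ⨅ k : {k : ℕ // 0 < k}, (kfoldChromaticNumber G k : ℝ) / (k : ℕ)

/-- The chromatic number as a natural number. -/
noncomputable def natChromaticNumber (G : SimpleGraph V) : ℕ :=
  sInf {n | G.Colorable n}

/-- The independence number `α(G)`. -/
noncomputable def indepNumber (G : SimpleGraph V) : ℕ :=
  sSup {n | ∃ s : Set V, (∀ u ∈ s, ∀ v ∈ s, ¬ G.Adj u v) ∧ s.ncard = n}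

/-- The bipartite graph `G̃` from the reduction: original vertices `V`, vertices
`s_{uv}, s'_{uv}` (type `↥G.edgeSet × Fin 2`, left summand) and `t_{uv}, t'_{uv}`
(right summand); each of `s_{uv}, s'_{uv}` is joined to `u` and `v`, and all
edges between `V_s` and `V_t` are present. -/
def tildeBip (G : SimpleGraph V) :
    SimpleGraph (V ⊕ ((↥G.edgeSet × Fin 2) ⊕ (↥G.edgeSet × Fin 2))) :=
  SimpleGraph.fromRel fun x y =>
    (∃ (a : V) (e : ↥G.edgeSet) (i : Fin 2),
        x = Sum.inl a ∧ y = Sum.inr (Sum.inl (e, i)) ∧ a ∈ (e : Sym2 V)) ∨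
    (∃ p q, x = Sum.inr (Sum.inl p) ∧ y = Sum.inr (Sum.inr q))

/-- The split graph `G̃` from the reduction: original vertices `V` and a clique on
`V_s = {s_{uv}, s'_{uv}, s''_{uv}}`, each of the three joined to `u` and `v`. -/
def tildeSplit (G : SimpleGraph V) : SimpleGraph (V ⊕ (↥G.edgeSet × Fin 3)) :=
  SimpleGraph.fromRel fun x y =>
    (∃ (a : V) (e : ↥G.edgeSet) (i : Fin 3),
        x = Sum.inl a ∧ y = Sum.inr (e, i) ∧ a ∈ (e : Sym2 V)) ∨
    (∃ p q, x = Sum.inr p ∧ y = Sum.inr q)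

/-- The graph `H`: `k` copies of `V` together with `V_s` and `V_t` as in `tildeBip`. -/
def HBip (G : SimpleGraph V) (k : ℕ) :
    SimpleGraph ((V × Fin k) ⊕ ((↥G.edgeSet × Fin 2) ⊕ (↥G.edgeSet × Fin 2))) :=
  SimpleGraph.fromRel fun x y =>
    (∃ (a : V) (j : Fin k) (e : ↥G.edgeSet) (i : Fin 2),
        x = Sum.inl (a, j) ∧ y = Sum.inr (Sum.inl (e, i)) ∧ a ∈ (e : Sym2 V)) ∨
    (∃ p q, x = Sum.inr (Sum.inl p) ∧ y = Sum.inr (Sum.inr q))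

/-- The graph `H`: `k` copies of `V` together with the clique `V_s` as in `tildeSplit`. -/
def HSplit (G : SimpleGraph V) (k : ℕ) :
    SimpleGraph ((V × Fin k) ⊕ (↥G.edgeSet × Fin 3)) :=
  SimpleGraph.fromRel fun x y =>
    (∃ (a : V) (j : Fin k) (e : ↥G.edgeSet) (i : Fin 3),
        x = Sum.inl (a, j) ∧ y = Sum.inr (e, i) ∧ a ∈ (e : Sym2 V)) ∨
    (∃ p q, x = Sum.inr p ∧ y = Sum.inr q)

/-! Two colors are necessary: every edge `xy` of `Cₙ` lies on a cycle, so a cut of `Cₙ - xy` is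
nonempty, and a vertex of it differs in color from `x` or from `y`. Two colors suffice when the
adjacent vertices `0, 1` get one color and all other vertices the other. For adjacent `x, y`, any
further vertex separates them in `Cₙ - xy`, and some such vertex differs in color from `x` or `y`.
For nonadjacent `x, y`, one vertex from each of the two open arcs between them forms a cut, and the
two arcs cannot be monochromatic of the same color. Positions on the cycle are measured by the
offsets `(v - x).val` from a base vertex `x`. -/

theorem Fin.val_sub_eq_one_iff {n : ℕ} (hn : 2 ≤ n) (a b : Fin n) :
    (a - b).val = 1 ↔ a.val = b.val + 1 ∨ (a.val = 0 ∧ b.val = n - 1) := by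
  rcases le_or_gt b a with h | h
  · rw [Fin.sub_val_of_le h]
    rw [Fin.le_def] at h
    omega
  · rw [Fin.coe_sub_iff_lt.2 h]
    rw [Fin.lt_def] at h
    omega

theorem Fin.val_sub_add_val_sub {n : ℕ} {a b : Fin n} (h : a ≠ b) :
    (a - b).val + (b - a).val = n := by
  rcases lt_or_gt_of_ne h with h | h <;>
  · rw [Fin.coe_sub_iff_lt.2 h, Fin.sub_val_of_le h.le]
    rw [Fin.lt_def] at h
    omega

theorem Fin.eq_of_val_sub_eq_val_sub {n : ℕ} [NeZero n] {u v : Fin n} (x : Fin n)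
    (h : (u - x).val = (v - x).val) : u = v :=
  sub_left_inj.1 (Fin.ext h)

theorem Fin.exists_val_sub_eq {n : ℕ} [NeZero n] (x : Fin n) {k : ℕ} (hk : k < n) :
    ∃ v : Fin n, (v - x).val = k :=
  ⟨x + ⟨k, hk⟩, by rw [add_sub_cancel_left]⟩

theorem SimpleGraph.Walk.exists_mem_support_of_boundary {G : SimpleGraph V}
    {u v : V} (p : G.Walk u v) {A S : Set V} (hu : u ∈ A) (hv : v ∉ A)
    (hS : ∀ a b, G.Adj a b → a ∈ A → b ∉ A → b ∈ S) : ∃ w ∈ p.support, w ∈ S := by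
  obtain ⟨d, hd, hA, hA'⟩ := p.exists_boundary_dart A hu hv
  exact ⟨d.snd, p.dart_snd_mem_support_of_mem_darts hd, hS _ _ d.adj hA hA'⟩

theorem IsRVDColoring.nontrivial {α : Type*} {G : SimpleGraph V} {c : V → α}
    (hc : IsRVDColoring G c) {x y : V} (hxy : G.Adj x y)
    (hr : (G.deleteEdges {s(x, y)}).Reachable x y) : Nontrivial α := by
  obtain ⟨S, hxS, hyS, hcut, hinj, -⟩ := hc x y hxy.ne
  obtain ⟨p⟩ := hr
  obtain ⟨v, -, hv⟩ := hcut p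
  rcases hinj hxy with h | h
  · exact nontrivial_of_ne (c v) (c x) fun he => hxS (h (.inr hv) (.inl rfl) he ▸ hv)
  · exact nontrivial_of_ne (c v) (c y) fun he => hyS (h (.inr hv) (.inl rfl) he ▸ hv)

theorem exists_ne_ne_apply_ne {W α : Type*} [Fintype W] (hW : 3 ≤ Fintype.card W)
    {c : W → α} {u v : W} (huv : c u ≠ c v) (x y : W) :
    ∃ a, a ≠ x ∧ a ≠ y ∧ (c a ≠ c x ∨ c a ≠ c y) := by
  classical
  by_contra! h
  obtain ⟨z, -, hz⟩ := Finset.exists_mem_notMem_of_card_lt_card (s := {x, y}) (t := .univ)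
    (Finset.card_le_two.trans_lt (by rw [Finset.card_univ]; omega))
  simp only [Finset.mem_insert, Finset.mem_singleton, not_or] at hz
  have hcxy : c x = c y := (h z hz.1 hz.2).1.symm.trans (h z hz.1 hz.2).2
  have hc : ∀ w, c w = c x := by
    intro w
    by_cases hwx : w = x
    · rw [hwx]
    by_cases hwy : w = y
    · rw [hwy, hcxy]
    exact (h w hwx hwy).1
  exact huv ((hc u).trans (hc v).symm)

namespace SimpleGraph

variable {n : ℕ}

theorem cycleGraph_adj_iff_sub_val (hn : 2 ≤ n) (x : Fin n) {u v : Fin n} :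
    (cycleGraph n).Adj u v ↔
      (u - x).val = (v - x).val + 1 ∨ (v - x).val = (u - x).val + 1 ∨
        ((u - x).val = 0 ∧ (v - x).val = n - 1) ∨ ((v - x).val = 0 ∧ (u - x).val = n - 1) := by
  have : NeZero n := ⟨by omega⟩
  rw [cycleGraph_adj', ← sub_sub_sub_cancel_right u v x, ← sub_sub_sub_cancel_right v u x,
    Fin.val_sub_eq_one_iff hn, Fin.val_sub_eq_one_iff hn]
  tauto

theorem cycleGraph_adj_of_val_lt_two (hn : 2 ≤ n) {u v : Fin n} (hu : u.val < 2) (hv : v.val < 2)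
    (huv : u ≠ v) : (cycleGraph n).Adj u v := by
  rw [cycleGraph_adj', Fin.val_sub_eq_one_iff hn, Fin.val_sub_eq_one_iff hn]
  have := Fin.val_ne_of_ne huv
  omega

theorem cycleGraph_not_adj_of_sub_val_lt (hn : 2 ≤ n) {x y u w : Fin n} (hu : 0 < (u - x).val)
    (huy : (u - x).val < (y - x).val) (hyw : (y - x).val < (w - x).val) :
    ¬ (cycleGraph n).Adj u w := by
  rw [cycleGraph_adj_iff_sub_val hn x]
  have := (w - x).isLt
  omega

theorem pathGraph_le_cycleGraph_deleteEdges (m : ℕ) :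
    pathGraph (m + 3) ≤ (cycleGraph (m + 3)).deleteEdges {s(0, Fin.last (m + 2))} := by
  intro u v huv
  refine (deleteEdges_adj).2 ⟨pathGraph_le_cycleGraph huv, ?_⟩
  rw [pathGraph_adj] at huv
  simp only [Set.mem_singleton_iff, Sym2.eq_iff, Fin.ext_iff, Fin.val_zero, Fin.val_last]
  omega

theorem cycleGraph_deleteEdges_reachable_zero_last (m : ℕ) :
    ((cycleGraph (m + 3)).deleteEdges {s(0, Fin.last (m + 2))}).Reachable 0 (Fin.last (m + 2)) :=
  (pathGraph_preconnected _ _ _).mono (pathGraph_le_cycleGraph_deleteEdges m)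

theorem cycleGraph_mem_support_of_adj (hn : 2 ≤ n) {x y a : Fin n} (hxy : (cycleGraph n).Adj x y)
    (hax : a ≠ x) (hay : a ≠ y) (p : ((cycleGraph n).deleteEdges {s(x, y)}).Walk x y) :
    a ∈ p.support := by
  have : NeZero n := ⟨by omega⟩
  wlog hxy1 : (x - y).val = 1 generalizing x y
  · have hyx1 : (y - x).val = 1 := (cycleGraph_adj'.1 hxy).resolve_left hxy1
    have hp := this hxy.symm hay hax (p.reverse.mapLe (by rw [Sym2.eq_swap])) hyx1
    rwa [Walk.support_mapLe_eq_support, Walk.support_reverse, List.mem_reverse] at hp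
  have hyx : (y - x).val = n - 1 := by
    have := Fin.val_sub_add_val_sub hxy.ne
    omega
  have hxx : (x - x).val = 0 := by simp
  have hax0 : (a - x).val ≠ 0 := fun h => hax (Fin.eq_of_val_sub_eq_val_sub x (by rw [h, hxx]))
  have hay0 : (a - x).val ≠ n - 1 :=
    fun h => hay (Fin.eq_of_val_sub_eq_val_sub x (by rw [h, hyx]))
  have hbdry : ∀ u v, ((cycleGraph n).deleteEdges {s(x, y)}).Adj u v →
      (u - x).val < (a - x).val → ¬ (v - x).val < (a - x).val → v ∈ ({a} : Set (Fin n)) := by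
    intro u v huv hu hv
    obtain ⟨huv, hne⟩ := deleteEdges_adj.1 huv
    rw [cycleGraph_adj_iff_sub_val hn x] at huv
    have := (v - x).isLt
    rcases huv with h | h | h | h
    · omega
    · exact Fin.eq_of_val_sub_eq_val_sub x (by omega)
    · have hux : u = x := Fin.eq_of_val_sub_eq_val_sub x (by rw [h.1, hxx])
      have hvy : v = y := Fin.eq_of_val_sub_eq_val_sub x (by rw [h.2, hyx])
      exact absurd (by rw [hux, hvy]; rfl) hne
    · omega
  obtain ⟨w, hw, rfl⟩ := p.exists_mem_support_of_boundary
    (A := {v | (v - x).val < (a - x).val}) (show (x - x).val < _ by omega)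
    (show ¬ (y - x).val < _ by omega) hbdry
  exact hw

theorem cycleGraph_mem_support_or_mem_support (hn : 2 ≤ n) {x y a b : Fin n}
    (ha : 0 < (a - x).val) (hay : (a - x).val < (y - x).val) (hyb : (y - x).val < (b - x).val)
    (p : (cycleGraph n).Walk x y) : a ∈ p.support ∨ b ∈ p.support := by
  have : NeZero n := ⟨by omega⟩
  have hxx : (x - x).val = 0 := by simp
  have hbdry : ∀ u v, (cycleGraph n).Adj u v →
      (u - x).val < (a - x).val ∨ (b - x).val < (u - x).val →
      ¬ ((v - x).val < (a - x).val ∨ (b - x).val < (v - x).val) → v ∈ ({a, b} : Set (Fin n)) := by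
    intro u v huv hu hv
    rw [cycleGraph_adj_iff_sub_val hn x] at huv
    have := (v - x).isLt
    have : (v - x).val = (a - x).val ∨ (v - x).val = (b - x).val := by omega
    exact this.imp (Fin.eq_of_val_sub_eq_val_sub x) (Fin.eq_of_val_sub_eq_val_sub x)
  obtain ⟨w, hw, rfl | rfl⟩ := p.exists_mem_support_of_boundary
    (A := {v | (v - x).val < (a - x).val ∨ (b - x).val < (v - x).val})
    (show (x - x).val < _ ∨ _ by omega) (show ¬ (_ ∨ _) by omega) hbdry
  exacts [.inl hw, .inr hw]

theorem cycleGraph_exists_val_lt_two_ne_ne (hn : 2 ≤ n) {x y : Fin n}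
    (hxy : ¬ (cycleGraph n).Adj x y) : ∃ t : Fin n, t.val < 2 ∧ t ≠ x ∧ t ≠ y := by
  rw [cycleGraph_adj', Fin.val_sub_eq_one_iff hn, Fin.val_sub_eq_one_iff hn] at hxy
  by_contra! h
  have h0 := h ⟨0, by omega⟩ (by simp)
  have h1 := h ⟨1, by omega⟩ (by simp)
  simp only [ne_eq, Fin.ext_iff] at h0 h1
  omega

def cycleColoring (n : ℕ) (v : Fin n) : Fin 2 :=
  if v.val < 2 then 0 else 1

theorem cycleColoring_eq_iff {u v : Fin n} :
    cycleColoring n u = cycleColoring n v ↔ (u.val < 2 ↔ v.val < 2) := by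
  by_cases hu : u.val < 2 <;> by_cases hv : v.val < 2 <;> simp [cycleColoring, hu, hv]

/-- Take a vertex of color `0` other than `x, y` on one side and the neighbor of `x` on the other:
the neighbor has color `1` since the two vertices of color `0` are adjacent. -/
theorem cycleColoring_exists_ne_of_not_adj (hn : 2 ≤ n) {x y : Fin n} (hxy : x ≠ y)
    (hadj : ¬ (cycleGraph n).Adj x y) :
    ∃ a b : Fin n, 0 < (a - x).val ∧ (a - x).val < (y - x).val ∧ (y - x).val < (b - x).val ∧
      cycleColoring n a ≠ cycleColoring n b := by
  have : NeZero n := ⟨by omega⟩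
  have hy0 : (y - x).val ≠ 0 :=
    fun h => hxy (Fin.eq_of_val_sub_eq_val_sub x (by simp [h])).symm
  have hy1 : (y - x).val ≠ 1 := fun h => hadj (cycleGraph_adj'.2 (.inr h))
  have hx1 : (x - y).val ≠ 1 := fun h => hadj (cycleGraph_adj'.2 (.inl h))
  have hsum := Fin.val_sub_add_val_sub hxy
  obtain ⟨t, ht, htx, hty⟩ := cycleGraph_exists_val_lt_two_ne_ne hn hadj
  have ht0 : (t - x).val ≠ 0 := fun h => htx (Fin.eq_of_val_sub_eq_val_sub x (by simp [h]))
  have hty' : (t - x).val ≠ (y - x).val := fun h => hty (Fin.eq_of_val_sub_eq_val_sub x h)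
  have := (t - x).isLt
  rcases lt_or_gt_of_ne hty' with hlt | hgt
  · obtain ⟨w, hw⟩ := Fin.exists_val_sub_eq x (k := n - 1) (by omega)
    refine ⟨t, w, by omega, hlt, by omega, fun hc => ?_⟩
    have htw : t ≠ w := fun h => by rw [h] at hlt; omega
    exact cycleGraph_not_adj_of_sub_val_lt hn (by omega) hlt (by omega)
      (cycleGraph_adj_of_val_lt_two hn ht (cycleColoring_eq_iff.1 hc |>.1 ht) htw)
  · obtain ⟨w, hw⟩ := Fin.exists_val_sub_eq x (k := 1) (by omega)
    refine ⟨w, t, by omega, by omega, hgt, fun hc => ?_⟩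
    have hwt : w ≠ t := fun h => by rw [h] at hw; omega
    exact cycleGraph_not_adj_of_sub_val_lt hn (by omega) (by omega) hgt
      (cycleGraph_adj_of_val_lt_two hn (cycleColoring_eq_iff.1 hc |>.2 ht) ht hwt)

theorem isRVDColoring_cycleColoring (hn : 3 ≤ n) :
    IsRVDColoring (cycleGraph n) (cycleColoring n) := by
  have : NeZero n := ⟨by omega⟩
  intro x y hxy
  by_cases hadj : (cycleGraph n).Adj x y
  · obtain ⟨a, hax, hay, hc⟩ := exists_ne_ne_apply_ne (by simpa using hn)
      (c := cycleColoring n) (u := ⟨0, by omega⟩) (v := ⟨2, by omega⟩)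
      (by simp [cycleColoring_eq_iff]) x y
    refine ⟨{a}, by simpa using hax.symm, by simpa using hay.symm,
      fun p => ⟨a, cycleGraph_mem_support_of_adj (by omega) hadj hax hay p, rfl⟩,
      fun _ => ?_, fun h => absurd hadj h⟩
    simp only [Set.injOn_pair]
    exact hc.imp (fun h h' => absurd h'.symm h) (fun h h' => absurd h'.symm h)
  · obtain ⟨a, b, ha, hay, hyb, hab⟩ := cycleColoring_exists_ne_of_not_adj (by omega) hxy hadj
    refine ⟨{a, b}, ?_, ?_, fun p => ?_, fun h => absurd h hadj, fun _ => ?_⟩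
    · rintro (rfl | rfl) <;> simp at ha hay hyb
    · rintro (rfl | rfl) <;> omega
    · have hp := cycleGraph_mem_support_or_mem_support (by omega) ha hay hyb
        (p.mapLe (deleteEdges_le _))
      rw [Walk.support_mapLe_eq_support] at hp
      rcases hp with hp | hp
      exacts [⟨a, hp, .inl rfl⟩, ⟨b, hp, .inr rfl⟩]
    · exact Set.injOn_pair.2 fun h => absurd h hab

end SimpleGraph

/-- For every cycle `C_n` of order `n ≥ 3`, `rvd(C_n) = 2`. -/
theorem rvd_cycleGraph (n : ℕ) (hn : 3 ≤ n) :
    rvd (SimpleGraph.cycleGraph n) = 2 := by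
  have hc := isRVDColoring_cycleColoring hn
  refine le_antisymm (Nat.sInf_le ⟨_, hc⟩) (le_csInf ⟨2, _, hc⟩ ?_)
  rintro m ⟨c, hc'⟩
  obtain ⟨k, rfl⟩ := Nat.exists_eq_add_of_le' hn
  have : Nontrivial (Fin m) := hc'.nontrivial (x := 0) (y := Fin.last (k + 2))
    (by simp [cycleGraph_adj]) (cycleGraph_deleteEdges_reachable_zero_last k)
  exact Fin.nontrivial_iff_two_le.1 this
end

section
/- Let G = (V, E) be a graph with no isolated vertices and at least one edge, and let k be a positive integer. Construct the bipartite graph G̃ as follows: for each edge uv ∈ E introduce four new vertices s_{uv}, s'_{uv}, t_{uv}, t'_{uv}, let V_s = {s_{uv}, s'_{uv} : uv ∈ E} and V_t = {t_{uv}, t'_{uv} : uv ∈ E}, set V(G̃) = V ∪ V_s ∪ V_t, and let E(G̃) consist of the edges us_{uv}, us'_{uv}, vs_{uv}, vs'_{uv} for each uv ∈ E together with all edges between V_s and V_t. If the chromatic number satisfies χ(G) ≤ k, then rvd(G̃) ≤ k + 2|E|. -/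
open SimpleGraph

variable {V : Type*}

/-!
A coloring that is injective on every neighbourhood is a rainbow vertex-disconnection coloring:
for `x ≠ y`, the set `N(x) \ {y}` separates `x` from `y` in `G - xy`, and together with `y` it
still lies in `N(x)`. In `G̃`, color `V` by a proper coloring of `G` and give `s_e^i` and `t_e^i`
the common fresh color `(e, i)`. Two vertices of `V` with a common neighbour `s_e^i` are the ends
of the edge `e`, hence get distinct colors, while `s_e^i` and `t_e^i` have no common neighbour.
-/

theorem SimpleGraph.Walk.exists_mem_support_neighborSet_sdiff {G : SimpleGraph V} {x y : V}
    (hxy : x ≠ y) (p : (G.deleteEdges {s(x, y)}).Walk x y) :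
    ∃ v ∈ p.support, v ∈ G.neighborSet x \ {y} := by
  cases p with
  | nil => exact absurd rfl hxy
  | @cons _ w _ h _ =>
    rw [deleteEdges_adj] at h
    refine ⟨w, by simp, h.1, fun hwy => h.2 ?_⟩
    rw [Set.mem_singleton_iff.mp hwy]
    exact Set.mem_singleton _

section InjectiveColoring

variable {G : SimpleGraph V} {α : Type*} {c : V → α}

theorem IsInjectiveColoring.injOn_neighborSet (hc : IsInjectiveColoring G c) (w : V) :
    Set.InjOn c (G.neighborSet w) := fun u hu v hv huv =>
  by_contra fun hne => hc u v w hu.symm hv.symm hne huv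

theorem IsInjectiveColoring.isRVDColoring (hc : IsInjectiveColoring G c) :
    IsRVDColoring G c := by
  intro x y hxy
  refine ⟨G.neighborSet x \ {y}, fun h => G.loopless.irrefl x h.1, fun h => h.2 rfl,
    Walk.exists_mem_support_neighborSet_sdiff hxy, fun hadj => Or.inr ?_,
    fun _ => (hc.injOn_neighborSet x).mono Set.sdiff_subset⟩
  rw [Set.insert_sdiff_singleton, Set.insert_eq_of_mem ((G.mem_neighborSet x y).mpr hadj)]
  exact hc.injOn_neighborSet x

theorem rvd_le_card_of_isInjectiveColoring [Fintype α] (hc : IsInjectiveColoring G c) :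
    rvd G ≤ Fintype.card α := by
  refine Nat.sInf_le ⟨Fintype.equivFin α ∘ c, IsInjectiveColoring.isRVDColoring ?_⟩
  exact fun u v w hu hv hne h => hc u v w hu hv hne ((Fintype.equivFin α).injective h)

end InjectiveColoring

section TildeBip

variable {G : SimpleGraph V} {α : Type*} {a b : V} {p q : ↥G.edgeSet × Fin 2}

@[simp]
theorem tildeBip_adj_inl_inl : ¬(tildeBip G).Adj (.inl a) (.inl b) := by
  simp [tildeBip]

@[simp]
theorem tildeBip_adj_inl_inrInl :
    (tildeBip G).Adj (.inl a) (.inr (.inl p)) ↔ a ∈ (p.1 : Sym2 V) := by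
  simp only [tildeBip, fromRel_adj]
  constructor
  · rintro ⟨-, (⟨_, _, _, ⟨⟩, ⟨⟩, h⟩ | ⟨_, _, ⟨⟩, _⟩) | (⟨_, _, _, _, ⟨⟩, _⟩ | ⟨_, _, _, ⟨⟩⟩)⟩
    exact h
  · exact fun h => ⟨Sum.inl_ne_inr, .inl (.inl ⟨a, p.1, p.2, rfl, rfl, h⟩)⟩

@[simp]
theorem tildeBip_adj_inl_inrInr : ¬(tildeBip G).Adj (.inl a) (.inr (.inr q)) := by
  simp [tildeBip]

@[simp]
theorem tildeBip_adj_inrInl_inrInl : ¬(tildeBip G).Adj (.inr (.inl p)) (.inr (.inl q)) := by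
  simp [tildeBip]

@[simp]
theorem tildeBip_adj_inrInr_inrInr : ¬(tildeBip G).Adj (.inr (.inr p)) (.inr (.inr q)) := by
  simp [tildeBip]

def tildeBipColoring (C : G.Coloring α) :
    V ⊕ ((↥G.edgeSet × Fin 2) ⊕ (↥G.edgeSet × Fin 2)) → α ⊕ (↥G.edgeSet × Fin 2) :=
  Sum.map C (Sum.elim id id)

theorem isInjectiveColoring_tildeBipColoring (C : G.Coloring α) :
    IsInjectiveColoring (tildeBip G) (tildeBipColoring C) := by
  intro u v w hu hv hne hc
  rcases u with a | p | p <;> rcases v with b | q | q <;>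
    simp only [tildeBipColoring, Sum.map_inl, Sum.map_inr, Sum.elim_inl, Sum.elim_inr, id,
      Sum.inl.injEq, Sum.inr.injEq, reduceCtorEq] at hc <;>
    rcases w with d | r | r <;> simp [adj_comm, hc] at hu hv hne
  have hab : G.Adj a b := G.mem_edgeSet.mp ((Sym2.mem_and_mem_iff hne).mp ⟨hu, hv⟩ ▸ r.1.2)
  exact C.valid hab hc

end TildeBip

theorem rvd_tildeBip_le_of_colorable_general [Fintype V] [DecidableEq V] (G : SimpleGraph V)
    [DecidableRel G.Adj]
    (k : ℕ) (hχ : G.Colorable k) :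
    rvd (tildeBip G) ≤ k + 2 * G.edgeFinset.card := by
  obtain ⟨C⟩ := hχ
  calc rvd (tildeBip G) ≤ Fintype.card (Fin k ⊕ (↥G.edgeSet × Fin 2)) :=
        rvd_le_card_of_isInjectiveColoring (isInjectiveColoring_tildeBipColoring C)
    _ = k + 2 * G.edgeFinset.card := by simp [edgeFinset_card, mul_comm]

/-- For `G` with no isolated vertices and at least one edge, if
`χ(G) ≤ k` then `rvd(G̃) ≤ k + 2|E|`, where `G̃` is the bipartite reduction graph. -/
theorem rvd_tildeBip_le_of_colorable [Fintype V] [DecidableEq V] (G : SimpleGraph V)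
    [DecidableRel G.Adj]
    (hiso : ∀ v : V, ∃ u : V, G.Adj v u) (hE : G.edgeSet.Nonempty)
    (k : ℕ) (hk : 0 < k) (hχ : G.Colorable k) :
    rvd (tildeBip G) ≤ k + 2 * G.edgeFinset.card :=
  rvd_tildeBip_le_of_colorable_general G k hχ
end

section
/- Let G = (V, E) be a graph with no isolated vertices and at least one edge, and let k be a positive integer. Construct the bipartite graph G̃ as follows: for each edge uv ∈ E introduce four new vertices s_{uv}, s'_{uv}, t_{uv}, t'_{uv}, let V_s = {s_{uv}, s'_{uv} : uv ∈ E} and V_t = {t_{uv}, t'_{uv} : uv ∈ E}, set V(G̃) = V ∪ V_s ∪ V_t, and let E(G̃) consist of the edges us_{uv}, us'_{uv}, vs_{uv}, vs'_{uv} for each uv ∈ E together with all edges between V_s and V_t. If rvd(G̃) ≤ k + 2|E|, then the chromatic number satisfies χ(G) ≤ k. -/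
open SimpleGraph

variable {V : Type*}

/-!
Fix an optimal rainbow vertex-disconnection coloring `c` of `G̃`. For an edge `uv` of `G`, the
vertices `s_{uv}` and `s'_{uv}` are nonadjacent, so any rainbow cut between them contains all their
common neighbours: `u`, `v` and the whole of `V_t`. Hence `c` is injective on `{u, v} ∪ V_t`.
As no vertex of `G` is isolated, the colors of `V` are proper and avoid the `2|E|` colors of `V_t`,
leaving at most `rvd(G̃) - 2|E| ≤ k` colors for `G`.
-/

lemma isRVDColoring_of_injective {α : Type*} (G : SimpleGraph V) {c : V → α}
    (hc : Function.Injective c) : IsRVDColoring G c := by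
  intro x y hxy
  refine ⟨{x, y}ᶜ, by simp, by simp, ?_, fun _ => Or.inl hc.injOn, fun _ => hc.injOn⟩
  rintro (_ | @⟨_, w, _, h, _⟩)
  · exact absurd rfl hxy
  · rw [deleteEdges_adj, Set.mem_singleton_iff, Sym2.congr_right] at h
    exact ⟨w, by simp, by simp [h.1.ne', h.2]⟩

lemma exists_isRVDColoring_fin_rvd [Fintype V] (G : SimpleGraph V) :
    ∃ c : V → Fin (rvd G), IsRVDColoring G c :=
  Nat.sInf_mem (s := {n | ∃ c : V → Fin n, IsRVDColoring G c})
    ⟨_, Fintype.equivFin V, isRVDColoring_of_injective G (Fintype.equivFin V).injective⟩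

/-- Every common neighbour `w` of nonadjacent `x, y` gives the walk `x w y` of `G - xy`, which the
rainbow cut can only meet at `w`. -/
lemma IsRVDColoring.injOn_commonNeighbors {α : Type*} {G : SimpleGraph V} {c : V → α}
    (hc : IsRVDColoring G c) {x y : V} (hxy : x ≠ y) (hnadj : ¬ G.Adj x y) :
    Set.InjOn c (G.commonNeighbors x y) := by
  obtain ⟨S, hxS, hyS, hcut, -, hinj⟩ := hc x y hxy
  refine (hinj hnadj).mono fun w hw => ?_
  rw [mem_commonNeighbors] at hw
  have hxw : (G.deleteEdges {s(x, y)}).Adj x w := by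
    rw [deleteEdges_adj, Set.mem_singleton_iff, Sym2.congr_right]
    exact ⟨hw.1, hw.2.ne'⟩
  have hwy : (G.deleteEdges {s(x, y)}).Adj w y := by
    rw [deleteEdges_adj, Set.mem_singleton_iff, Sym2.congr_left]
    exact ⟨hw.2.symm, hw.1.ne'⟩
  obtain ⟨z, hz, hzS⟩ := hcut (.cons hxw (.cons hwy .nil))
  simp only [Walk.support_cons, Walk.support_nil, List.mem_cons, List.not_mem_nil,
    or_false] at hz
  rcases hz with rfl | rfl | rfl
  · exact absurd hzS hxS
  · exact hzS
  · exact absurd hzS hyS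

lemma colorable_sub_card_of_forall_notMem {G : SimpleGraph V} {n : ℕ} (f : V → Fin n)
    (T : Finset (Fin n)) (hT : ∀ a, f a ∉ T) (hf : ∀ a b, G.Adj a b → f a ≠ f b) :
    G.Colorable (n - T.card) := by
  have hC : G.Colorable (Fintype.card (Tᶜ : Finset (Fin n))) :=
    (Coloring.mk (fun a => (⟨f a, Finset.mem_compl.2 (hT a)⟩ : (Tᶜ : Finset (Fin n))))
      fun hab h => hf _ _ hab (congrArg Subtype.val h)).colorable
  rwa [Fintype.card_coe, Finset.card_compl, Fintype.card_fin] at hC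

section tildeBip

variable {G : SimpleGraph V}

lemma tildeBip_adj_inl_inrl {a : V} {e : G.edgeSet} (i : Fin 2) (ha : a ∈ (e : Sym2 V)) :
    (tildeBip G).Adj (.inl a) (.inr (.inl (e, i))) := by
  rw [tildeBip, fromRel_adj]
  exact ⟨by simp, .inl (.inl ⟨a, e, i, rfl, rfl, ha⟩)⟩

lemma tildeBip_adj_inrl_inrr (p q : G.edgeSet × Fin 2) :
    (tildeBip G).Adj (.inr (.inl p)) (.inr (.inr q)) := by
  rw [tildeBip, fromRel_adj]
  exact ⟨by simp, .inl (.inr ⟨p, q, rfl, rfl⟩)⟩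

lemma tildeBip_not_adj_inrl_inrl (p q : G.edgeSet × Fin 2) :
    ¬ (tildeBip G).Adj (.inr (.inl p)) (.inr (.inl q)) := by
  simp [tildeBip, fromRel_adj]

lemma IsRVDColoring.injOn_tildeBip {α : Type*}
    {c : V ⊕ ((G.edgeSet × Fin 2) ⊕ (G.edgeSet × Fin 2)) → α}
    (hc : IsRVDColoring (tildeBip G) c) (e : G.edgeSet) :
    Set.InjOn c (Sum.inl '' {a | a ∈ (e : Sym2 V)} ∪ Set.range (Sum.inr ∘ Sum.inr)) := by
  refine (hc.injOn_commonNeighbors (x := .inr (.inl (e, 0))) (y := .inr (.inl (e, 1)))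
    (by simp) (tildeBip_not_adj_inrl_inrl _ _)).mono ?_
  rintro _ (⟨a, ha, rfl⟩ | ⟨q, rfl⟩) <;> rw [mem_commonNeighbors]
  · exact ⟨(tildeBip_adj_inl_inrl 0 ha).symm, (tildeBip_adj_inl_inrl 1 ha).symm⟩
  · exact ⟨tildeBip_adj_inrl_inrr _ _, tildeBip_adj_inrl_inrr _ _⟩

variable {α : Type*} {c : V ⊕ ((G.edgeSet × Fin 2) ⊕ (G.edgeSet × Fin 2)) → α}

lemma IsRVDColoring.injective_tildeBip_inrr (hc : IsRVDColoring (tildeBip G) c) :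
    Function.Injective (c ∘ Sum.inr ∘ Sum.inr) := by
  rintro ⟨e, i⟩ q h
  simpa using hc.injOn_tildeBip e (.inr ⟨_, rfl⟩) (.inr ⟨q, rfl⟩) h

lemma IsRVDColoring.tildeBip_inl_ne_inrr (hc : IsRVDColoring (tildeBip G) c) {a b : V}
    (hab : G.Adj a b) (q : G.edgeSet × Fin 2) : c (.inl a) ≠ c (.inr (.inr q)) := fun h => by
  simpa using hc.injOn_tildeBip ⟨s(a, b), hab⟩ (.inl ⟨a, Sym2.mem_mk_left a b, rfl⟩)
    (.inr ⟨q, rfl⟩) h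

lemma IsRVDColoring.tildeBip_inl_ne_inl (hc : IsRVDColoring (tildeBip G) c) {a b : V}
    (hab : G.Adj a b) : c (.inl a) ≠ c (.inl b) := fun h =>
  hab.ne <| Sum.inl_injective <| hc.injOn_tildeBip ⟨s(a, b), hab⟩
    (.inl ⟨a, Sym2.mem_mk_left a b, rfl⟩) (.inl ⟨b, Sym2.mem_mk_right a b, rfl⟩) h

end tildeBip

theorem colorable_of_rvd_tildeBip_le_general [Fintype V] (G : SimpleGraph V)
    [DecidableRel G.Adj]
    (hiso : ∀ v : V, ∃ u : V, G.Adj v u)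
    (k : ℕ) (hrvd : rvd (tildeBip G) ≤ k + 2 * G.edgeFinset.card) :
    G.Colorable k := by
  obtain ⟨c, hc⟩ := exists_isRVDColoring_fin_rvd (tildeBip G)
  set T := Finset.univ.image (c ∘ Sum.inr ∘ Sum.inr)
  have hT : T.card = 2 * G.edgeFinset.card := by
    rw [Finset.card_image_of_injective _ hc.injective_tildeBip_inrr, Finset.card_univ,
      Fintype.card_prod, Fintype.card_fin, edgeFinset_card, mul_comm]
  have hV : ∀ a, (c ∘ Sum.inl) a ∉ T := fun a hmem => by
    obtain ⟨b, hab⟩ := hiso a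
    obtain ⟨q, -, hq⟩ := Finset.mem_image.1 hmem
    exact hc.tildeBip_inl_ne_inrr hab q hq.symm
  exact (colorable_sub_card_of_forall_notMem _ T hV
    fun _ _ hab => hc.tildeBip_inl_ne_inl hab).mono (by omega)

/-- For `G` with no isolated vertices and at least one edge, if
`rvd(G̃) ≤ k + 2|E|` then `χ(G) ≤ k`, where `G̃` is the bipartite reduction graph. -/
theorem colorable_of_rvd_tildeBip_le [Fintype V] [DecidableEq V] (G : SimpleGraph V)
    [DecidableRel G.Adj]
    (hiso : ∀ v : V, ∃ u : V, G.Adj v u) (hE : G.edgeSet.Nonempty)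
    (k : ℕ) (hk : 0 < k) (hrvd : rvd (tildeBip G) ≤ k + 2 * G.edgeFinset.card) :
    G.Colorable k :=
  colorable_of_rvd_tildeBip_le_general G hiso k hrvd
end

section
/- Let G = (V, E) be a graph with no isolated vertices, at least one edge, V = {v₁, …, v_n}, and let k be a positive integer. Construct the graph H as follows: take k disjoint copies V_j = {v₁^j, …, v_n^j} (j ∈ [k]) of V, let V_s = {s_{uv}, s'_{uv} : uv ∈ E} and V_t = {t_{uv}, t'_{uv} : uv ∈ E}, set V(H) = ⋃_{j=1}^k V_j ∪ V_s ∪ V_t, and let E(H) consist of the edges u^j s_{uv}, u^j s'_{uv}, v^j s_{uv}, v^j s'_{uv} for each uv ∈ E and j ∈ [k], together with all edges between V_s and V_t. Then kn/α(G) + 2|E| ≤ k·χ_f(G) + 2|E| ≤ χ_k(G) + 2|E| ≤ rvd(H) ≤ k·χ(G) + 2|E|, where α(G) is the independence number, χ_f(G) the fractional chromatic number, χ_k(G) the k-fold chromatic number, and χ(G) the chromatic number of G. -/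
open SimpleGraph

variable {V : Type*}

/-!
For the upper bound, colour copy `j` of `v` by `(C v, j)` for a proper colouring `C` of `G`,
and both `s_{e,i}` and `t_{e,i}` by `(e, i)`. Every neighbourhood of `H` is then rainbow, and a
colouring with rainbow neighbourhoods is a rainbow vertex-disconnection colouring, because
`N(x) \ {y}` separates `x` from `y` and, when `x` and `y` are adjacent, `N(x) \ {y}` plus `y`
is `N(x)`.

For the lower bound, a cut between two nonadjacent vertices contains all their common
neighbours, and the common neighbourhood of `s_e` and `s'_e` consists of `V_t` and the copies
of the ends of `e`. So `V_t` gets `2|E|` distinct colours and, as every vertex of `G` lies on an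
edge, the colours of the `k` copies of a vertex form a `k`-set avoiding them, these `k`-sets
being disjoint for adjacent vertices: a `k`-fold colouring of `G` with the remaining colours.

The other two inequalities are the definition of `χ_f` and the double counting `k n ≤ χ_k α`
(each colour class of a `k`-fold colouring is independent).
-/

open Finset Function

section RainbowVertexCut

variable {W α β : Type*} {H : SimpleGraph W} {x y : W} {S : Set W} {c : W → α}

def IsVertexCut (H : SimpleGraph W) (x y : W) (S : Set W) : Prop :=
  x ∉ S ∧ y ∉ S ∧ ∀ p : (H.deleteEdges {s(x, y)}).Walk x y, ∃ v ∈ p.support, v ∈ S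

theorem isRVDColoring_iff :
    IsRVDColoring H c ↔ ∀ x y, x ≠ y → ∃ S, IsVertexCut H x y S ∧
      (H.Adj x y → Set.InjOn c (insert x S) ∨ Set.InjOn c (insert y S)) ∧
      (¬ H.Adj x y → Set.InjOn c S) := by
  simp only [IsRVDColoring, IsVertexCut, and_assoc]

theorem IsVertexCut.commonNeighbors_subset (hS : IsVertexCut H x y S) :
    H.commonNeighbors x y ⊆ S := by
  intro u hu
  rw [mem_commonNeighbors] at hu
  have hxu : (H.deleteEdges {s(x, y)}).Adj x u := by
    simp [deleteEdges_adj, hu.1, hu.1.ne', hu.2.ne']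
  have huy : (H.deleteEdges {s(x, y)}).Adj u y := by
    simp [deleteEdges_adj, hu.2.symm, hu.1.ne', hu.2.ne']
  obtain ⟨v, hv, hvS⟩ := hS.2.2 (.cons hxu (.cons huy .nil))
  simp only [Walk.support_cons, Walk.support_nil, List.mem_cons, List.not_mem_nil,
    or_false] at hv
  rcases hv with rfl | rfl | rfl
  exacts [(hS.1 hvS).elim, hvS, (hS.2.1 hvS).elim]

theorem isVertexCut_neighborSet_diff (hxy : x ≠ y) :
    IsVertexCut H x y (H.neighborSet x \ {y}) := by
  refine ⟨fun h => H.irrefl h.1, fun h => h.2 rfl,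
    fun p => ⟨p.snd, p.getVert_mem_support 1, ?_⟩⟩
  have h := p.adj_snd (Walk.not_nil_of_ne hxy)
  rw [deleteEdges_adj] at h
  exact ⟨h.1, fun hy => h.2 (by rw [Set.mem_singleton_iff.mp hy]; rfl)⟩

theorem IsRVDColoring.injOn_commonNeighbors_s14 (hc : IsRVDColoring H c) (hxy : x ≠ y)
    (hadj : ¬ H.Adj x y) : Set.InjOn c (H.commonNeighbors x y) := by
  obtain ⟨S, hS, -, hinj⟩ := isRVDColoring_iff.mp hc x y hxy
  exact (hinj hadj).mono hS.commonNeighbors_subset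

theorem isRVDColoring_of_injOn_neighborSet (h : ∀ x, Set.InjOn c (H.neighborSet x)) :
    IsRVDColoring H c := by
  refine isRVDColoring_iff.mpr fun x y hxy =>
    ⟨_, isVertexCut_neighborSet_diff hxy, fun hadj => Or.inr ?_,
      fun _ => (h x).mono Set.sdiff_subset⟩
  rw [Set.insert_sdiff_singleton, Set.insert_eq_of_mem ((mem_neighborSet _ _ _).mpr hadj)]
  exact h x

theorem IsRVDColoring.comp {f : α → β} (hc : IsRVDColoring H c) (hf : Injective f) :
    IsRVDColoring H (f ∘ c) := by
  intro x y hxy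
  obtain ⟨S, hxS, hyS, hcut, hadj, hnadj⟩ := hc x y hxy
  exact ⟨S, hxS, hyS, hcut, fun h => (hadj h).imp hf.comp_injOn hf.comp_injOn,
    fun h => hf.comp_injOn (hnadj h)⟩

theorem rvd_le_card [Fintype α] (hc : IsRVDColoring H c) : rvd H ≤ Fintype.card α :=
  Nat.sInf_le ⟨_, hc.comp (Fintype.equivFin α).injective⟩

theorem le_rvd [Finite W] {N : ℕ} (h : ∀ n (c : W → Fin n), IsRVDColoring H c → N ≤ n) :
    N ≤ rvd H := by
  have := Fintype.ofFinite W
  exact le_csInf ⟨_, _, isRVDColoring_of_injOn_neighborSet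
    fun _ => (Fintype.equivFin W).injective.injOn⟩ fun n ⟨c, hc⟩ => h n c hc

end RainbowVertexCut

section MultiColoring

variable {α : Type*} {G : SimpleGraph V} {k : ℕ}

theorem exists_isKFoldColoring_fin_card [Fintype α] (c : V → Finset α)
    (hcard : ∀ v, #(c v) = k) (hdisj : ∀ u v, G.Adj u v → Disjoint (c u) (c v)) :
    ∃ c' : V → Finset (Fin (Fintype.card α)), IsKFoldColoring G k c' :=
  let e := (Fintype.equivFin α).toEmbedding
  ⟨fun v => (c v).map e, fun v => by rw [card_map, hcard],
    fun u v huv => (disjoint_map e).mpr (hdisj u v huv)⟩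

theorem kfoldChromaticNumber_le_card [DecidableEq α] (A : Finset α) (c : V → Finset α)
    (hcard : ∀ v, #(c v) = k) (hdisj : ∀ u v, G.Adj u v → Disjoint (c u) (c v))
    (hA : ∀ v, c v ⊆ A) : kfoldChromaticNumber G k ≤ #A := by
  rw [← Fintype.card_coe A]
  refine Nat.sInf_le (exists_isKFoldColoring_fin_card (fun v => (c v).subtype (· ∈ A))
    (fun v => ?_) fun u v huv => ?_)
  · rw [card_subtype, filter_true_of_mem (hA v), hcard]
  · rw [← disjoint_map (Embedding.subtype _), subtype_map, subtype_map]
    exact disjoint_filter_filter (hdisj u v huv)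

theorem fracChromaticNumber_le_div (hk : 0 < k) :
    fracChromaticNumber G ≤ kfoldChromaticNumber G k / k :=
  ciInf_le ⟨0, by rintro _ ⟨i, rfl⟩; positivity⟩ (⟨k, hk⟩ : {k : ℕ // 0 < k})

theorem mul_fracChromaticNumber_le (k : ℕ) :
    k * fracChromaticNumber G ≤ kfoldChromaticNumber G k := by
  rcases k.eq_zero_or_pos with rfl | hk
  · simp
  · exact (le_div_iff₀' (by positivity)).mp (fracChromaticNumber_le_div hk)

variable [Fintype V]

theorem exists_isKFoldColoring_kfoldChromaticNumber (G : SimpleGraph V) (k : ℕ) :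
    ∃ c : V → Finset (Fin (kfoldChromaticNumber G k)), IsKFoldColoring G k c := by
  have := exists_isKFoldColoring_fin_card (G := G) (k := k)
    (fun v => {v} ×ˢ (univ : Finset (Fin k))) (fun v => by simp)
    fun u v huv => disjoint_product.mpr (Or.inl (disjoint_singleton.mpr huv.ne))
  exact Nat.sInf_mem (s := {n | ∃ c : V → Finset (Fin n), IsKFoldColoring G k c}) ⟨_, this⟩

theorem card_le_indepNumber (s : Finset V) (hs : ∀ u ∈ s, ∀ v ∈ s, ¬ G.Adj u v) :
    #s ≤ indepNumber G := by
  refine le_csSup ⟨Nat.card V, ?_⟩ ⟨s, by simpa using hs, Set.ncard_coe_finset s⟩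
  rintro n ⟨t, -, rfl⟩
  exact Set.ncard_le_card t

theorem IsKFoldColoring.card_mul_le {n : ℕ} {c : V → Finset (Fin n)}
    (hc : IsKFoldColoring G k c) : Fintype.card V * k ≤ n * indepNumber G := by
  have := card_mul_le_card_mul (fun v i => i ∈ c v) (s := univ) (t := univ)
    (fun v _ => (hc.1 v).symm.le.trans_eq (by congr 1; ext; simp [bipartiteAbove]))
    (fun i _ => card_le_indepNumber _ fun u hu v hv huv => by
      simp only [bipartiteBelow, mem_filter] at hu hv
      exact disjoint_left.mp (hc.2 u v huv) hu.2 hv.2)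
  simpa using this

theorem card_div_indepNumber_le_fracChromaticNumber :
    (Fintype.card V : ℝ) / indepNumber G ≤ fracChromaticNumber G := by
  rcases (indepNumber G).eq_zero_or_pos with h0 | hpos
  · rw [h0, Nat.cast_zero, div_zero]
    exact Real.iInf_nonneg fun _ => by positivity
  · have : Nonempty {k : ℕ // 0 < k} := ⟨⟨1, one_pos⟩⟩
    refine le_ciInf fun ⟨k, hk⟩ => ?_
    obtain ⟨c, hc⟩ := exists_isKFoldColoring_kfoldChromaticNumber G k
    rw [div_le_div_iff₀ (by positivity) (by positivity)]
    exact_mod_cast hc.card_mul_le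

end MultiColoring

theorem SimpleGraph.Coloring.eq_of_mem_edge {α : Type*} {G : SimpleGraph V} (C : G.Coloring α)
    {e : Sym2 V} (he : e ∈ G.edgeSet) {a b : V} (ha : a ∈ e) (hb : b ∈ e) (h : C a = C b) :
    a = b := by
  by_contra hab
  rw [(Sym2.mem_and_mem_iff hab).mp ⟨ha, hb⟩, mem_edgeSet] at he
  exact C.valid he h

namespace HBip

variable {G : SimpleGraph V} {k : ℕ}

@[simp]
theorem not_adj_inl_inl (x y : V × Fin k) : ¬ (HBip G k).Adj (.inl x) (.inl y) := by
  simp only [HBip, fromRel_adj]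
  grind

@[simp]
theorem adj_inl_inrl (x : V × Fin k) (p : G.edgeSet × Fin 2) :
    (HBip G k).Adj (.inl x) (.inr (.inl p)) ↔ x.1 ∈ (p.1 : Sym2 V) := by
  simp only [HBip, fromRel_adj]
  grind

@[simp]
theorem adj_inrl_inl (p : G.edgeSet × Fin 2) (x : V × Fin k) :
    (HBip G k).Adj (.inr (.inl p)) (.inl x) ↔ x.1 ∈ (p.1 : Sym2 V) := by
  rw [adj_comm, adj_inl_inrl]

@[simp]
theorem not_adj_inl_inrr (x : V × Fin k) (q : G.edgeSet × Fin 2) :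
    ¬ (HBip G k).Adj (.inl x) (.inr (.inr q)) := by
  simp only [HBip, fromRel_adj]
  grind

@[simp]
theorem not_adj_inrr_inl (q : G.edgeSet × Fin 2) (x : V × Fin k) :
    ¬ (HBip G k).Adj (.inr (.inr q)) (.inl x) := by
  rw [adj_comm]
  exact not_adj_inl_inrr x q

@[simp]
theorem adj_inrl_inrr (p q : G.edgeSet × Fin 2) :
    (HBip G k).Adj (.inr (.inl p)) (.inr (.inr q)) := by
  simp only [HBip, fromRel_adj]
  grind

@[simp]
theorem adj_inrr_inrl (q p : G.edgeSet × Fin 2) :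
    (HBip G k).Adj (.inr (.inr q)) (.inr (.inl p)) :=
  (adj_inrl_inrr p q).symm

@[simp]
theorem not_adj_inrl_inrl (p q : G.edgeSet × Fin 2) :
    ¬ (HBip G k).Adj (.inr (.inl p)) (.inr (.inl q)) := by
  simp only [HBip, fromRel_adj]
  grind

@[simp]
theorem not_adj_inrr_inrr (p q : G.edgeSet × Fin 2) :
    ¬ (HBip G k).Adj (.inr (.inr p)) (.inr (.inr q)) := by
  simp only [HBip, fromRel_adj]
  grind

def coloring {β : Type*} (C : G.Coloring β) :
    (V × Fin k) ⊕ ((G.edgeSet × Fin 2) ⊕ (G.edgeSet × Fin 2)) →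
      (β × Fin k) ⊕ (G.edgeSet × Fin 2) :=
  Sum.elim (fun x => .inl (C x.1, x.2)) (Sum.elim .inr .inr)

theorem injOn_neighborSet_coloring {β : Type*} (C : G.Coloring β) (x) :
    Set.InjOn (coloring (k := k) C) ((HBip G k).neighborSet x) := by
  rintro y hy z hz hyz
  rw [mem_neighborSet] at hy hz
  rcases x with x | p | q <;> rcases y with ⟨a, j⟩ | p' | q' <;>
    rcases z with ⟨b, j'⟩ | p'' | q'' <;> simp_all [coloring]
  exact C.eq_of_mem_edge p.1.2 hy hz hyz.1

section LowerBound

variable {α : Type*} {c : (V × Fin k) ⊕ ((G.edgeSet × Fin 2) ⊕ (G.edgeSet × Fin 2)) → α}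

theorem inrr_mem_commonNeighbors (e : G.edgeSet) (q : G.edgeSet × Fin 2) :
    .inr (.inr q) ∈ (HBip G k).commonNeighbors (.inr (.inl (e, 0))) (.inr (.inl (e, 1))) := by
  simp [mem_commonNeighbors]

theorem inl_mem_commonNeighbors {e : G.edgeSet} {a : V} (ha : a ∈ (e : Sym2 V)) (j : Fin k) :
    .inl (a, j) ∈ (HBip G k).commonNeighbors (.inr (.inl (e, 0))) (.inr (.inl (e, 1))) := by
  simp [mem_commonNeighbors, ha]

theorem injOn_commonNeighbors_s14 (hc : IsRVDColoring (HBip G k) c) (e : G.edgeSet) :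
    Set.InjOn c ((HBip G k).commonNeighbors (.inr (.inl (e, 0))) (.inr (.inl (e, 1)))) :=
  hc.injOn_commonNeighbors_s14 (by simp) (by simp)

theorem injective_comp_inrr (hc : IsRVDColoring (HBip G k) c) :
    Injective fun q => c (.inr (.inr q)) := fun q q' h => by
  simpa using injOn_commonNeighbors_s14 hc q.1 (inrr_mem_commonNeighbors _ q)
    (inrr_mem_commonNeighbors _ q') h

theorem apply_inl_ne_apply_inrr (hc : IsRVDColoring (HBip G k) c) {e : G.edgeSet} {a : V}
    (ha : a ∈ (e : Sym2 V)) (j : Fin k) (q : G.edgeSet × Fin 2) :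
    c (.inl (a, j)) ≠ c (.inr (.inr q)) := fun h => by
  simpa using injOn_commonNeighbors_s14 hc e (inl_mem_commonNeighbors ha j)
    (inrr_mem_commonNeighbors e q) h

theorem eq_of_apply_inl_eq (hc : IsRVDColoring (HBip G k) c) {e : G.edgeSet} {a b : V}
    (ha : a ∈ (e : Sym2 V)) (hb : b ∈ (e : Sym2 V)) {j j' : Fin k}
    (h : c (.inl (a, j)) = c (.inl (b, j'))) : (a, j) = (b, j') := by
  simpa using injOn_commonNeighbors_s14 hc e (inl_mem_commonNeighbors ha j)
    (inl_mem_commonNeighbors hb j') h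

end LowerBound

end HBip

section HBipBounds

variable [Fintype V] {G : SimpleGraph V} [DecidableRel G.Adj]

theorem rvd_HBip_le (k : ℕ) :
    rvd (HBip G k) ≤ k * natChromaticNumber G + 2 * #G.edgeFinset := by
  obtain ⟨C⟩ : G.Colorable (natChromaticNumber G) :=
    Nat.sInf_mem (s := {n | G.Colorable n}) ⟨_, G.colorable_of_fintype⟩
  calc rvd (HBip G k)
      ≤ Fintype.card ((Fin (natChromaticNumber G) × Fin k) ⊕ (G.edgeSet × Fin 2)) :=
        rvd_le_card (isRVDColoring_of_injOn_neighborSet (HBip.injOn_neighborSet_coloring C))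
    _ = k * natChromaticNumber G + 2 * #G.edgeFinset := by
        simp [edgeFinset_card, mul_comm]

theorem kfoldChromaticNumber_add_le_of_isRVDColoring (hiso : ∀ v : V, ∃ u : V, G.Adj v u)
    {k m : ℕ} {c : (V × Fin k) ⊕ ((G.edgeSet × Fin 2) ⊕ (G.edgeSet × Fin 2)) → Fin m}
    (hc : IsRVDColoring (HBip G k) c) : kfoldChromaticNumber G k + 2 * #G.edgeFinset ≤ m := by
  choose nbr hnbr using hiso
  have mem_edge (a : V) : a ∈ ((⟨s(a, nbr a), hnbr a⟩ : G.edgeSet) : Sym2 V) :=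
    Sym2.mem_mk_left _ _
  let copyColors (a : V) : Finset (Fin m) := univ.image fun j => c (.inl (a, j))
  let T : Finset (Fin m) := univ.image fun q => c (.inr (.inr q))
  let A : Finset (Fin m) := univ.biUnion copyColors
  have hT : #T = 2 * #G.edgeFinset := by
    rw [card_image_of_injective _ (HBip.injective_comp_inrr hc)]
    simp [edgeFinset_card, mul_comm]
  have hA : kfoldChromaticNumber G k ≤ #A := by
    refine kfoldChromaticNumber_le_card A copyColors (fun a => ?_) (fun a b hab => ?_)
      fun a => subset_biUnion_of_mem _ (mem_univ a)
    · rw [card_image_of_injective _ fun j j' h =>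
        (Prod.mk.inj (HBip.eq_of_apply_inl_eq hc (mem_edge a) (mem_edge a) h)).2]
      simp
    · simp only [copyColors, Finset.disjoint_left, mem_image]
      rintro _ ⟨j, -, rfl⟩ ⟨j', -, h⟩
      exact hab.ne (Prod.mk.inj (HBip.eq_of_apply_inl_eq hc (e := ⟨s(a, b), hab⟩)
        (Sym2.mem_mk_left _ _) (Sym2.mem_mk_right _ _) h.symm)).1
  have hTA : Disjoint A T := by
    simp only [A, T, copyColors, Finset.disjoint_left, mem_biUnion, mem_image]
    rintro _ ⟨a, -, j, -, rfl⟩ ⟨q, -, h⟩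
    exact HBip.apply_inl_ne_apply_inrr hc (mem_edge a) j q h.symm
  calc kfoldChromaticNumber G k + 2 * #G.edgeFinset ≤ #A + #T := by omega
    _ = #(A ∪ T) := (card_union_of_disjoint hTA).symm
    _ ≤ m := (card_le_univ _).trans_eq (Fintype.card_fin m)

end HBipBounds

theorem rvd_HBip_bounds_general [Fintype V] (G : SimpleGraph V)
    [DecidableRel G.Adj]
    (hiso : ∀ v : V, ∃ u : V, G.Adj v u)
    (k : ℕ) :
    ((k : ℝ) * (Fintype.card V : ℝ) / (indepNumber G : ℝ) + 2 * (G.edgeFinset.card : ℝ)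
        ≤ (k : ℝ) * fracChromaticNumber G + 2 * (G.edgeFinset.card : ℝ)) ∧
    ((k : ℝ) * fracChromaticNumber G + 2 * (G.edgeFinset.card : ℝ)
        ≤ (kfoldChromaticNumber G k : ℝ) + 2 * (G.edgeFinset.card : ℝ)) ∧
    (kfoldChromaticNumber G k + 2 * G.edgeFinset.card ≤ rvd (HBip G k)) ∧
    (rvd (HBip G k) ≤ k * natChromaticNumber G + 2 * G.edgeFinset.card) := by
  refine ⟨?_, ?_, le_rvd fun _ _ => kfoldChromaticNumber_add_le_of_isRVDColoring hiso,
    rvd_HBip_le k⟩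
  · gcongr ?_ + _
    rw [mul_div_assoc]
    exact mul_le_mul_of_nonneg_left card_div_indepNumber_le_fracChromaticNumber k.cast_nonneg
  · gcongr ?_ + _
    exact mul_fracChromaticNumber_le k

/-- For the graph `H` built from `k` copies of `V` together with `V_s` and
`V_t`, we have `kn/α(G) + 2|E| ≤ k·χ_f(G) + 2|E| ≤ χ_k(G) + 2|E| ≤ rvd(H) ≤
k·χ(G) + 2|E|`. -/
theorem rvd_HBip_bounds [Fintype V] [DecidableEq V] (G : SimpleGraph V)
    [DecidableRel G.Adj]
    (hiso : ∀ v : V, ∃ u : V, G.Adj v u) (hE : G.edgeSet.Nonempty)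
    (k : ℕ) (hk : 0 < k) :
    ((k : ℝ) * (Fintype.card V : ℝ) / (indepNumber G : ℝ) + 2 * (G.edgeFinset.card : ℝ)
        ≤ (k : ℝ) * fracChromaticNumber G + 2 * (G.edgeFinset.card : ℝ)) ∧
    ((k : ℝ) * fracChromaticNumber G + 2 * (G.edgeFinset.card : ℝ)
        ≤ (kfoldChromaticNumber G k : ℝ) + 2 * (G.edgeFinset.card : ℝ)) ∧
    (kfoldChromaticNumber G k + 2 * G.edgeFinset.card ≤ rvd (HBip G k)) ∧
    (rvd (HBip G k) ≤ k * natChromaticNumber G + 2 * G.edgeFinset.card) :=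
  rvd_HBip_bounds_general G hiso k
end
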